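/- arXiv:2006.07000 — 5 statements merged into one kernel-verified Lean document; each statement's English description precedes it below -/
import Mathlib

section
/- Let G be a d-regular simple graph on a finite vertex set V with n vertices, where d ≥ 1, and let t ≥ 2 be an integer. Then the number of subsets A ⊆ V with |A| = t such that the subgraph of G induced on A is connected is at most 4^(t-2) · d · (d-1)^(t-2) · n. -/
/-!
Fix an edge `vw` inside a connected set `A`. The component `B` of `w` in `A - v` and the rest
`C = A \ B`, which is connected and contains `v`, write `A` as a union of a connected set rooted at
`w` avoiding its parent `v` and a connected set rooted at `v` avoiding `w`. Splitting rooted sets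
in the same way, where the root has at most `Δ - 1` admissible neighbours (`Δ` the maximum
degree), the Catalan recurrence bounds the number of rooted connected `(m + 1)`-sets by
`catalan m * (Δ - 1) ^ m`. Choosing the edge `vw` costs a factor `n * Δ`, and
`catalan (m + 1) ≤ 4 ^ m`.
-/

open Finset

theorem catalan_succ_le_four_pow (m : ℕ) : catalan (m + 1) ≤ 4 ^ m := by
  refine le_of_mul_le_mul_left (a := (m + 1) * (m + 2)) ?_ (by positivity)
  calc (m + 1) * (m + 2) * catalan (m + 1)
      = 2 * (2 * m + 1) * m.centralBinom := by
        rw [mul_assoc, succ_mul_catalan_eq_centralBinom, Nat.succ_mul_centralBinom_succ]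
    _ ≤ 2 * (2 * m + 1) * 4 ^ m := Nat.mul_le_mul_left _ (Nat.centralBinom_le_four_pow m)
    _ ≤ (m + 1) * (m + 2) * 4 ^ m := Nat.mul_le_mul_right _ (by nlinarith [Nat.le_mul_self m])

theorem sum_catalan_mul_pow (m x : ℕ) :
    ∑ i ∈ range (m + 1), catalan i * x ^ i * (catalan (m - i) * x ^ (m - i)) =
      catalan (m + 1) * x ^ m := by
  rw [catalan_succ, Fin.sum_univ_eq_sum_range (fun i => catalan i * catalan (m - i)), sum_mul]
  refine sum_congr rfl fun i hi => ?_
  rw [← Nat.add_sub_of_le (mem_range_succ_iff.mp hi), pow_add, Nat.add_sub_cancel_left]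
  ring

namespace SimpleGraph

variable {V : Type*} {G : SimpleGraph V}

theorem induce_preconnected_subset_of_adj_closed {A S : Set V}
    (hA : (G.induce A).Preconnected) {x : V} (hxA : x ∈ A) (hxS : x ∈ S)
    (hS : ∀ a ∈ S, ∀ b ∈ A, G.Adj a b → b ∈ S) : A ⊆ S := by
  suffices key : ∀ (a b : A), (G.induce A).Walk a b → a.1 ∈ S → b.1 ∈ S from
    fun y hy => key _ _ (hA ⟨x, hxA⟩ ⟨y, hy⟩).some hxS
  intro a b p
  induction p with
  | nil => exact id
  | cons h _ ih => exact fun ha => ih (hS _ ha _ (Subtype.prop _) h)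

theorem exists_adj_of_induce_preconnected {A : Set V} (hA : (G.induce A).Preconnected) {v : V}
    (hv : v ∈ A) (hA₂ : A.Nontrivial) : ∃ w ∈ A, G.Adj v w := by
  by_contra! h
  exact hA₂.not_subset_singleton <| induce_preconnected_subset_of_adj_closed hA hv rfl
    fun a ha b hb hab => absurd hab (Set.mem_singleton_iff.mp ha ▸ h b hb)

theorem induce_singleton_connected (v : V) : (G.induce {v}).Connected := by
  rw [induce_singleton_eq_top]
  exact connected_top

theorem exists_adj_closed_connected {S : Finset V} {w : V} (hw : w ∈ S) :
    ∃ B ⊆ S, w ∈ B ∧ (G.induce (B : Set V)).Connected ∧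
      ∀ a ∈ B, ∀ b ∈ S, G.Adj a b → b ∈ B := by
  classical
  obtain ⟨B, hBmem, hBmax⟩ := Finset.exists_maximal (s := S.powerset.filter
    fun B : Finset V => w ∈ B ∧ (G.induce (B : Set V)).Connected)
    ⟨{w}, mem_filter.mpr ⟨by simpa using hw, mem_singleton_self w,
      by rw [coe_singleton]; exact induce_singleton_connected w⟩⟩
  simp only [mem_filter, mem_powerset] at hBmem hBmax
  obtain ⟨hBS, hwB, hB⟩ := hBmem
  refine ⟨B, hBS, hwB, hB, fun a ha b hb hab => ?_⟩
  have hconn : (G.induce (insert b B : Finset V)).Connected := by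
    rw [coe_insert, Set.insert_eq, Set.union_comm]
    exact connected_induce_union hB.preconnected (induce_singleton_connected b).preconnected
      ha rfl hab
  exact hBmax ⟨insert_subset hb hBS, mem_insert_of_mem hwB, hconn⟩ (subset_insert b B)
    (mem_insert_self b B)

variable [DecidableEq V] in
theorem exists_split_of_adj {A : Finset V} (hA : (G.induce (A : Set V)).Connected) {v w : V}
    (hv : v ∈ A) (hw : w ∈ A) (hvw : G.Adj v w) :
    ∃ B C : Finset V, Disjoint B C ∧ B ∪ C = A ∧ w ∈ B ∧ v ∈ C ∧
      (G.induce (B : Set V)).Connected ∧ (G.induce (C : Set V)).Connected := by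
  obtain ⟨B, hBA, hwB, hB, hBclosed⟩ :=
    exists_adj_closed_connected (G := G) (mem_erase.mpr ⟨hvw.ne', hw⟩)
  have hvB : v ∉ B := fun h => (mem_erase.mp (hBA h)).1 rfl
  obtain ⟨C, hCA, hvC, hC, hCclosed⟩ :=
    exists_adj_closed_connected (G := G) (mem_sdiff.mpr ⟨hv, hvB⟩)
  refine ⟨B, C, disjoint_of_subset_right hCA disjoint_sdiff, ?_, hwB, hvC, hB, hC⟩
  refine (union_subset (hBA.trans (erase_subset v A)) (hCA.trans sdiff_subset)).antisymm ?_
  have hcover := induce_preconnected_subset_of_adj_closed hA.preconnected (mem_coe.mpr hv)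
    (mem_coe.mpr (mem_union_right B hvC)) (S := ((B ∪ C : Finset V) : Set V))
  refine coe_subset.mp (hcover fun a ha b hb hab => ?_)
  simp only [mem_coe, mem_union] at ha hb ⊢
  by_cases hbB : b ∈ B
  · exact Or.inl hbB
  rcases ha with haB | haC
  · by_cases hbv : b = v
    · exact Or.inr (hbv ▸ hvC)
    · exact Or.inl (hBclosed a haB b (mem_erase.mpr ⟨hbv, hb⟩) hab)
  · exact Or.inr (hCclosed a haC b (mem_sdiff.mpr ⟨hb, hbB⟩) hab)

section Counting

variable [Fintype V] [DecidableRel G.Adj]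

variable (G) in
open Classical in
/-- `p` plays the role of the parent of the root `v`: forbidding it leaves `v` at most
`G.maxDegree - 1` neighbours to grow into. -/
noncomputable def rootedConnectedSets (v p : V) (k : ℕ) : Finset (Finset V) :=
  {A | #A = k ∧ v ∈ A ∧ p ∉ A ∧ (G.induce (A : Set V)).Connected}

theorem mem_rootedConnectedSets {v p : V} {k : ℕ} {A : Finset V} :
    A ∈ G.rootedConnectedSets v p k ↔
      #A = k ∧ v ∈ A ∧ p ∉ A ∧ (G.induce (A : Set V)).Connected := by
  simp [rootedConnectedSets]

variable [DecidableEq V]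

variable (G) in
noncomputable def gluings (v w p : V) (m : ℕ) : Finset (Finset V) :=
  (range (m + 1)).biUnion fun i =>
    (G.rootedConnectedSets w v (i + 1) ×ˢ G.rootedConnectedSets v p (m + 1 - i)).image
      fun BC => BC.1 ∪ BC.2

/-- The hypothesis `hp` covers both `p ∉ A` and `p = w`. -/
theorem mem_gluings_of_adj {A : Finset V} {m : ℕ} (hA : (G.induce (A : Set V)).Connected)
    (hcard : #A = m + 2) {v w p : V} (hv : v ∈ A) (hw : w ∈ A) (hvw : G.Adj v w)
    (hp : p ∉ A.erase w) : A ∈ G.gluings v w p m := by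
  obtain ⟨B, C, hBC, rfl, hwB, hvC, hB, hC⟩ := exists_split_of_adj hA hv hw hvw
  have hBpos : 0 < #B := card_pos.mpr ⟨w, hwB⟩
  have hCpos : 0 < #C := card_pos.mpr ⟨v, hvC⟩
  rw [card_union_of_disjoint hBC] at hcard
  refine mem_biUnion.mpr ⟨#B - 1, mem_range.mpr (by omega),
    mem_image.mpr ⟨(B, C), mem_product.mpr ⟨?_, ?_⟩, rfl⟩⟩
  · rw [Nat.sub_add_cancel hBpos]
    exact mem_rootedConnectedSets.mpr ⟨rfl, hwB, fun h => Finset.disjoint_left.mp hBC h hvC, hB⟩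
  · rw [show m + 1 - (#B - 1) = #C by omega]
    refine mem_rootedConnectedSets.mpr ⟨rfl, hvC, fun hpC => hp ?_, hC⟩
    exact mem_erase.mpr
      ⟨fun hpw => Finset.disjoint_left.mp hBC hwB (hpw ▸ hpC), mem_union_right B hpC⟩

theorem card_gluings_le_of_forall_le {v w p : V} {m : ℕ} (hvw : G.Adj v w) (hvp : G.Adj v p)
    (hbound : ∀ k ≤ m, ∀ x y, G.Adj x y →
      #(G.rootedConnectedSets x y (k + 1)) ≤ catalan k * (G.maxDegree - 1) ^ k) :
    #(G.gluings v w p m) ≤ catalan (m + 1) * (G.maxDegree - 1) ^ m := by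
  rw [← sum_catalan_mul_pow]
  refine card_biUnion_le.trans (sum_le_sum fun i hi => ?_)
  have him : i ≤ m := mem_range_succ_iff.mp hi
  refine card_image_le.trans ((card_product _ _).trans_le (Nat.mul_le_mul ?_ ?_))
  · exact hbound i him w v hvw.symm
  · rw [show m + 1 - i = m - i + 1 by omega]
    exact hbound (m - i) (Nat.sub_le m i) v p hvp

theorem card_rootedConnectedSets_le {v p : V} (hvp : G.Adj v p) (m : ℕ) :
    #(G.rootedConnectedSets v p (m + 1)) ≤ catalan m * (G.maxDegree - 1) ^ m := by
  induction m using Nat.strong_induction_on generalizing v p with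
  | _ m ih =>
  rcases m with _ | m
  · have hsingleton : G.rootedConnectedSets v p 1 ⊆ {{v}} := fun A hA => by
      obtain ⟨hcard, hvA, -⟩ := mem_rootedConnectedSets.mp hA
      exact mem_singleton.mpr (eq_singleton_iff_unique_mem.mpr
        ⟨hvA, fun x hx => card_le_one.mp hcard.le x hx v hvA⟩)
    simpa using card_le_card hsingleton
  have hsub : G.rootedConnectedSets v p (m + 2) ⊆
      ((G.neighborFinset v).erase p).biUnion fun w => G.gluings v w p m := by
    intro A hA
    obtain ⟨hcard, hvA, hpA, hA⟩ := mem_rootedConnectedSets.mp hA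
    obtain ⟨w, hwA, hvw⟩ := exists_adj_of_induce_preconnected hA.preconnected hvA
      (one_lt_card_iff_nontrivial.mp (by omega))
    refine mem_biUnion.mpr ⟨w, mem_erase.mpr ⟨?_, (mem_neighborFinset G v w).mpr hvw⟩,
      mem_gluings_of_adj hA hcard hvA hwA hvw fun h => hpA (mem_of_mem_erase h)⟩
    rintro rfl
    exact hpA hwA
  calc #(G.rootedConnectedSets v p (m + 2))
      ≤ ∑ w ∈ (G.neighborFinset v).erase p, #(G.gluings v w p m) :=
        (card_le_card hsub).trans card_biUnion_le
    _ ≤ ∑ w ∈ (G.neighborFinset v).erase p, catalan (m + 1) * (G.maxDegree - 1) ^ m := by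
        refine sum_le_sum fun w hw => card_gluings_le_of_forall_le ?_ hvp
          fun k hk x y hxy => ih k (by omega) hxy
        exact (mem_neighborFinset G v w).mp (mem_of_mem_erase hw)
    _ ≤ (G.maxDegree - 1) * (catalan (m + 1) * (G.maxDegree - 1) ^ m) := by
        rw [sum_const, smul_eq_mul, card_erase_of_mem ((mem_neighborFinset G v p).mpr hvp),
          card_neighborFinset_eq_degree]
        gcongr
        exact G.degree_le_maxDegree v
    _ = catalan (m + 1) * (G.maxDegree - 1) ^ (m + 1) := by ring

theorem ncard_connected_finsets_le (m : ℕ) :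
    {A : Finset V | #A = m + 2 ∧ (G.induce (A : Set V)).Connected}.ncard ≤
      Fintype.card V * (G.maxDegree * (catalan (m + 1) * (G.maxDegree - 1) ^ m)) := by
  have hsub : {A : Finset V | #A = m + 2 ∧ (G.induce (A : Set V)).Connected} ⊆
      ↑(univ.biUnion fun v => (G.neighborFinset v).biUnion fun w => G.gluings v w w m) := by
    rintro A ⟨hcard, hA⟩
    obtain ⟨v, hvA⟩ : A.Nonempty := card_pos.mp (by omega)
    obtain ⟨w, hwA, hvw⟩ := exists_adj_of_induce_preconnected hA.preconnected hvA
      (one_lt_card_iff_nontrivial.mp (by omega))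
    refine mem_coe.mpr (mem_biUnion.mpr ⟨v, mem_univ v, mem_biUnion.mpr
      ⟨w, (mem_neighborFinset G v w).mpr hvw, ?_⟩⟩)
    exact mem_gluings_of_adj hA hcard hvA hwA hvw (notMem_erase w A)
  calc {A : Finset V | #A = m + 2 ∧ (G.induce (A : Set V)).Connected}.ncard
      ≤ #(univ.biUnion fun v => (G.neighborFinset v).biUnion fun w => G.gluings v w w m) := by
        rw [← Set.ncard_coe_finset]
        exact Set.ncard_le_ncard hsub (finite_toSet _)
    _ ≤ ∑ v, ∑ w ∈ G.neighborFinset v, #(G.gluings v w w m) :=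
        card_biUnion_le.trans (sum_le_sum fun v _ => card_biUnion_le)
    _ ≤ ∑ v : V, ∑ w ∈ G.neighborFinset v, catalan (m + 1) * (G.maxDegree - 1) ^ m := by
        refine sum_le_sum fun v _ => sum_le_sum fun w hw => ?_
        have hvw := (mem_neighborFinset G v w).mp hw
        exact card_gluings_le_of_forall_le hvw hvw
          fun k _ x y hxy => card_rootedConnectedSets_le hxy k
    _ ≤ ∑ _v : V, G.maxDegree * (catalan (m + 1) * (G.maxDegree - 1) ^ m) := by
        refine sum_le_sum fun v _ => ?_
        rw [sum_const, smul_eq_mul, card_neighborFinset_eq_degree]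
        gcongr
        exact G.degree_le_maxDegree v
    _ = Fintype.card V * (G.maxDegree * (catalan (m + 1) * (G.maxDegree - 1) ^ m)) := by
        rw [sum_const, card_univ, smul_eq_mul]

end Counting

end SimpleGraph

theorem connected_induced_subgraph_count_general {V : Type*} [Fintype V] (G : SimpleGraph V) [DecidableRel G.Adj]
    (d t : ℕ) (hreg : G.IsRegularOfDegree d) (ht : 2 ≤ t) :
    {A : Finset V | A.card = t ∧ (G.induce (A : Set V)).Connected}.ncard ≤
      4 ^ (t - 2) * d * (d - 1) ^ (t - 2) * Fintype.card V := by
  classical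
  obtain ⟨m, rfl⟩ : ∃ m, t = m + 2 := ⟨t - 2, by omega⟩
  have hΔ : G.maxDegree ≤ d := G.maxDegree_le_of_forall_degree_le d fun v => (hreg v).le
  calc _ ≤ Fintype.card V * (G.maxDegree * (catalan (m + 1) * (G.maxDegree - 1) ^ m)) :=
        G.ncard_connected_finsets_le m
    _ ≤ Fintype.card V * (d * (4 ^ m * (d - 1) ^ m)) := by
        gcongr
        exact catalan_succ_le_four_pow m
    _ = 4 ^ (m + 2 - 2) * d * (d - 1) ^ (m + 2 - 2) * Fintype.card V := by
        rw [Nat.add_sub_cancel]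
        ring

/-- If `G` is a `d`-regular simple graph on a finite vertex set `V` with `n`
vertices, `d ≥ 1`, and `t ≥ 2`, then the number of `t`-element subsets `A ⊆ V` inducing a
connected subgraph of `G` is at most `4^(t-2) * d * (d-1)^(t-2) * n`. -/
theorem connected_induced_subgraph_count {V : Type*} [Fintype V] [DecidableEq V] (G : SimpleGraph V) [DecidableRel G.Adj]
    (d t : ℕ) (hd : 1 ≤ d) (hreg : G.IsRegularOfDegree d) (ht : 2 ≤ t) :
    {A : Finset V | A.card = t ∧ (G.induce (A : Set V)).Connected}.ncard ≤
      4 ^ (t - 2) * d * (d - 1) ^ (t - 2) * Fintype.card V :=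
  connected_induced_subgraph_count_general G d t hreg ht
end

section
/- Let G be a d-regular simple graph on a finite vertex set V, where d ≥ 1, let v ∈ V be a fixed vertex, and let t ≥ 2 be an integer. Then the number of subsets A ⊆ V with v ∈ A and |A| = t such that the subgraph of G induced on A is connected is at most 4^(t-2) · d · (d-1)^(t-2). -/
/-!
Grow a connected set `A ∋ v` by a depth-first search from `v` which, at each step, either pushes
onto the stack an undiscovered neighbour in `A` of the top vertex, or pops that vertex. After the
first push (at most `d` choices), the top vertex always has a discovered neighbour, so each push
has at most `d - 1` choices. The number `N(s, k)` of sets the search can still reach with a stack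
of size `s` and `k` vertices left to discover therefore satisfies
`N(s, k) ≤ N(s - 1, k) + (d - 1) N(s + 1, k - 1)`, whence `N(s, k) ≤ 2 ^ (s + 2k - 2) (d - 1) ^ k`;
after the first push, `s = 2` and `k = t - 2`.
-/

open Finset

namespace SimpleGraph

variable {V : Type*} [DecidableEq V] (G : SimpleGraph V)

/-- The search state has discovered `D` and holds the vertices `S` on its stack; `A` is reachable
from it when every vertex of `A \ D` is joined to `S` by a path through `A \ D`. That is stated
here as a cut condition: no nonempty set of undiscovered vertices is cut off from the rest. -/
def IsRootedExtension (D S A : Finset V) : Prop :=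
  D ⊆ A ∧ ∀ Y ⊆ A \ D, Y.Nonempty → ∃ y ∈ Y, ∃ z ∈ S ∪ (A \ D) \ Y, G.Adj y z

variable {G}

theorem isRootedExtension_singleton_of_connected {v : V} {A : Finset V} (hv : v ∈ A)
    (hA : (G.induce (A : Set V)).Connected) : G.IsRootedExtension {v} {v} A := by
  refine ⟨singleton_subset_iff.2 hv, fun Y hY ⟨y, hy⟩ => ?_⟩
  have hyA : y ∈ A := (mem_sdiff.1 (hY hy)).1
  obtain ⟨p⟩ := hA.preconnected ⟨y, hyA⟩ ⟨v, hv⟩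
  have hvY : v ∉ Y := fun h => (mem_sdiff.1 (hY h)).2 (mem_singleton_self v)
  obtain ⟨⟨⟨a, b⟩, hab⟩, -, ha, hb⟩ :=
    p.exists_boundary_dart {x | x.1 ∈ Y} (by simpa using hy) (by simpa using hvY)
  refine ⟨a, ha, b, ?_, hab⟩
  by_cases hbv : b.1 = v
  · simp [hbv]
  · simp_all

namespace IsRootedExtension

variable {D S A : Finset V}

theorem eq_of_empty (h : G.IsRootedExtension D ∅ A) : A = D := by
  by_contra hne
  have hnew : (A \ D).Nonempty := sdiff_nonempty.2 fun hAD => hne (hAD.antisymm h.1)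
  obtain ⟨y, -, z, hz, -⟩ := h.2 (A \ D) Subset.rfl hnew
  simp at hz

theorem of_insert {u : V} (h : G.IsRootedExtension D (insert u S) A)
    (hu : ∀ w ∈ A \ D, ¬G.Adj u w) : G.IsRootedExtension D S A := by
  refine ⟨h.1, fun Y hY hne => ?_⟩
  obtain ⟨y, hy, z, hz, hyz⟩ := h.2 Y hY hne
  refine ⟨y, hy, z, ?_, hyz⟩
  rcases mem_union.1 hz with hz | hz
  · rcases mem_insert.1 hz with rfl | hz
    · exact absurd hyz.symm (hu y (hY hy))
    · exact mem_union_left _ hz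
  · exact mem_union_right _ hz

theorem insert {w : V} (h : G.IsRootedExtension D S A) (hw : w ∈ A) :
    G.IsRootedExtension (insert w D) (insert w S) A := by
  refine ⟨insert_subset hw h.1, fun Y hY hne => ?_⟩
  have hY' : Y ⊆ A \ D := hY.trans (sdiff_subset_sdiff Subset.rfl (subset_insert w D))
  obtain ⟨y, hy, z, hz, hyz⟩ := h.2 Y hY' hne
  refine ⟨y, hy, z, ?_, hyz⟩
  by_cases hzw : z = w
  · simp [hzw]
  · simp only [mem_union, mem_sdiff, mem_insert] at hz ⊢
    tauto

end IsRootedExtension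

variable [Fintype V]

variable (G) in
open Classical in
noncomputable def rootedExtensions (D S : Finset V) (k : ℕ) : Finset (Finset V) :=
  {A | G.IsRootedExtension D S A ∧ #A = #D + k}

theorem mem_rootedExtensions {D S A : Finset V} {k : ℕ} :
    A ∈ G.rootedExtensions D S k ↔ G.IsRootedExtension D S A ∧ #A = #D + k := by
  classical
  simp [rootedExtensions]

theorem rootedExtensions_zero_subset (D S : Finset V) : G.rootedExtensions D S 0 ⊆ {D} := by
  intro A hA
  obtain ⟨h, hcard⟩ := mem_rootedExtensions.1 hA
  exact mem_singleton.2 (eq_of_subset_of_card_le h.1 hcard.le).symm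

theorem rootedExtensions_empty_succ (D : Finset V) (k : ℕ) :
    G.rootedExtensions D ∅ (k + 1) = ∅ := by
  refine eq_empty_of_forall_notMem fun A hA => ?_
  obtain ⟨h, hcard⟩ := mem_rootedExtensions.1 hA
  rw [h.eq_of_empty] at hcard
  omega

variable [DecidableRel G.Adj]

theorem card_neighborFinset_sdiff_lt_degree {D : Finset V} {u w : V} (huD : u ∈ D)
    (h : G.Adj w u) : #(G.neighborFinset w \ D) < G.degree w := by
  rw [← card_neighborFinset_eq_degree]
  exact card_lt_card ((ssubset_iff_of_subset sdiff_subset).2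
    ⟨u, (mem_neighborFinset G w u).2 h, fun hu => (mem_sdiff.1 hu).2 huD⟩)

theorem rootedExtensions_insert_succ_subset (D S : Finset V) (u : V) (k : ℕ) :
    G.rootedExtensions D (insert u S) (k + 1) ⊆ G.rootedExtensions D S (k + 1) ∪
      (G.neighborFinset u \ D).biUnion
        fun w => G.rootedExtensions (insert w D) (insert w (insert u S)) k := by
  intro A hA
  obtain ⟨h, hcard⟩ := mem_rootedExtensions.1 hA
  by_cases hpush : ∃ w ∈ A \ D, G.Adj u w
  · obtain ⟨w, hw, huw⟩ := hpush
    have hwD : w ∉ D := (mem_sdiff.1 hw).2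
    refine mem_union_right _ (mem_biUnion.2 ⟨w, ?_, ?_⟩)
    · simpa [hwD] using huw
    · rw [mem_rootedExtensions, card_insert_of_notMem hwD]
      exact ⟨h.insert (mem_sdiff.1 hw).1, by omega⟩
  · push Not at hpush
    exact mem_union_left _ (mem_rootedExtensions.2 ⟨h.of_insert hpush, hcard⟩)

theorem forall_card_neighborFinset_sdiff_insert_le {b : ℕ} (hdeg : ∀ u, G.degree u ≤ b + 1)
    {D S : Finset V} {u w : V} (hSD : S ⊆ D) (hS : ∀ x ∈ S, #(G.neighborFinset x \ D) ≤ b)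
    (hu : u ∈ S) (huw : G.Adj u w) :
    ∀ x ∈ insert w S, #(G.neighborFinset x \ insert w D) ≤ b := by
  refine forall_mem_insert _ _ _ |>.2 ⟨?_, fun x hx => ?_⟩
  · have := G.card_neighborFinset_sdiff_lt_degree (mem_insert_of_mem (b := w) (hSD hu))
      huw.symm
    have := hdeg w
    omega
  · exact (card_le_card (sdiff_subset_sdiff Subset.rfl (subset_insert w D))).trans (hS x hx)

/-- The exponent `#S + 2 * k - 2` is truncated only when `k = 0`, where any power of `2` bounds
the at most one reachable set. -/
theorem card_rootedExtensions_le {b : ℕ} (hdeg : ∀ u, G.degree u ≤ b + 1) (k : ℕ) :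
    ∀ D S : Finset V, S ⊆ D → (∀ u ∈ S, #(G.neighborFinset u \ D) ≤ b) →
      #(G.rootedExtensions D S k) ≤ 2 ^ (#S + 2 * k - 2) * b ^ k := by
  induction k with
  | zero =>
    intro D S _ _
    calc #(G.rootedExtensions D S 0) ≤ #{D} := card_le_card (rootedExtensions_zero_subset D S)
      _ ≤ 2 ^ (#S + 2 * 0 - 2) * b ^ 0 := by simpa using Nat.one_le_two_pow
  | succ k ih =>
    intro D S
    induction S using Finset.induction_on with
    | empty => simp [rootedExtensions_empty_succ]
    | insert u S huS ihS =>
      intro hSD hS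
      have hpush : ∀ w ∈ G.neighborFinset u \ D,
          #(G.rootedExtensions (insert w D) (insert w (insert u S)) k) ≤
            2 ^ (#S + 2 * k) * b ^ k := by
        intro w hw
        obtain ⟨huw, hwD⟩ := mem_sdiff.1 hw
        have hwS : w ∉ insert u S := fun h => hwD (hSD h)
        have hsize := ih (insert w D) (insert w (insert u S)) (insert_subset_insert w hSD)
          (forall_card_neighborFinset_sdiff_insert_le hdeg hSD hS (mem_insert_self u S)
            ((mem_neighborFinset G u w).1 huw))
        rwa [card_insert_of_notMem hwS, card_insert_of_notMem huS,
          show #S + 1 + 1 + 2 * k - 2 = #S + 2 * k by omega] at hsize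
      have hpop := ihS ((subset_insert u S).trans hSD) fun x hx => hS x (mem_insert_of_mem hx)
      calc #(G.rootedExtensions D (insert u S) (k + 1))
          ≤ #(G.rootedExtensions D S (k + 1)) + #(G.neighborFinset u \ D) *
              (2 ^ (#S + 2 * k) * b ^ k) :=
            (card_le_card (rootedExtensions_insert_succ_subset D S u k)).trans
              ((card_union_le _ _).trans
                (Nat.add_le_add_left (card_biUnion_le_card_mul _ _ _ hpush) _))
        _ ≤ 2 ^ (#S + 2 * (k + 1) - 2) * b ^ (k + 1) + b * (2 ^ (#S + 2 * k) * b ^ k) := by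
            gcongr
            exact hS u (mem_insert_self u S)
        _ = 2 ^ (#(insert u S) + 2 * (k + 1) - 2) * b ^ (k + 1) := by
            rw [card_insert_of_notMem huS, show #S + 2 * (k + 1) - 2 = #S + 2 * k by omega,
              show #S + 1 + 2 * (k + 1) - 2 = #S + 2 * k + 1 by omega]
            ring

theorem forall_card_neighborFinset_sdiff_pair_le {b : ℕ} (hdeg : ∀ u, G.degree u ≤ b + 1)
    {v w : V} (hvw : G.Adj v w) :
    ∀ x ∈ ({w, v} : Finset V), #(G.neighborFinset x \ {w, v}) ≤ b := by
  simp only [forall_mem_insert, mem_singleton, forall_eq]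
  constructor
  · have := G.card_neighborFinset_sdiff_lt_degree (D := {w, v}) (by simp) hvw.symm
    have := hdeg w
    omega
  · have := G.card_neighborFinset_sdiff_lt_degree (D := {w, v}) (by simp) hvw
    have := hdeg v
    omega

theorem card_rootedExtensions_singleton_le {b : ℕ} (hdeg : ∀ u, G.degree u ≤ b + 1) (v : V)
    (k : ℕ) : #(G.rootedExtensions {v} {v} (k + 1)) ≤ G.degree v * (4 ^ k * b ^ k) := by
  have hroot : G.rootedExtensions {v} {v} (k + 1) ⊆
      (G.neighborFinset v).biUnion fun w => G.rootedExtensions {w, v} {w, v} k := by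
    have := rootedExtensions_insert_succ_subset (G := G) {v} ∅ v k
    rwa [rootedExtensions_empty_succ, empty_union, LawfulSingleton.insert_empty_eq,
      sdiff_eq_self_of_disjoint (G.neighborFinset_disjoint_singleton v)] at this
  have hpush : ∀ w ∈ G.neighborFinset v,
      #(G.rootedExtensions {w, v} {w, v} k) ≤ 4 ^ k * b ^ k := by
    intro w hw
    have hvw : G.Adj v w := (mem_neighborFinset G v w).1 hw
    simpa [card_pair hvw.ne', pow_mul] using card_rootedExtensions_le hdeg k _ _ Subset.rfl
      (forall_card_neighborFinset_sdiff_pair_le hdeg hvw)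
  rw [← card_neighborFinset_eq_degree]
  exact (card_le_card hroot).trans (card_biUnion_le_card_mul _ _ _ hpush)

end SimpleGraph

open Finset SimpleGraph in
theorem connected_induced_subgraph_count_rooted_general {V : Type*} [Fintype V]
    (G : SimpleGraph V) [DecidableRel G.Adj] (d t : ℕ)
    (hreg : G.IsRegularOfDegree d) (v : V) (ht : 2 ≤ t) :
    {A : Finset V | v ∈ A ∧ A.card = t ∧ (G.induce (A : Set V)).Connected}.ncard ≤
      4 ^ (t - 2) * d * (d - 1) ^ (t - 2) := by
  classical
  obtain ⟨k, rfl⟩ : ∃ k, t = k + 2 := ⟨t - 2, by omega⟩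
  have hsub : {A : Finset V | v ∈ A ∧ A.card = k + 2 ∧ (G.induce (A : Set V)).Connected} ⊆
      G.rootedExtensions {v} {v} (k + 1) := fun A ⟨hv, hcard, hA⟩ =>
    mem_rootedExtensions.2
      ⟨isRootedExtension_singleton_of_connected hv hA, by rw [hcard, card_singleton]; omega⟩
  calc _ ≤ (G.rootedExtensions {v} {v} (k + 1) : Set (Finset V)).ncard :=
        Set.ncard_le_ncard hsub (finite_toSet _)
    _ = #(G.rootedExtensions {v} {v} (k + 1)) := Set.ncard_coe_finset _
    _ ≤ G.degree v * (4 ^ k * (d - 1) ^ k) :=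
        card_rootedExtensions_singleton_le (fun u => (hreg u).le.trans (by omega)) v k
    _ = 4 ^ (k + 2 - 2) * d * (d - 1) ^ (k + 2 - 2) := by
        rw [hreg v, Nat.add_sub_cancel]
        ring

/-- If `G` is a `d`-regular simple graph on a finite vertex set `V`, `d ≥ 1`,
`v ∈ V` is a fixed vertex and `t ≥ 2`, then the number of `t`-element subsets `A ⊆ V`
containing `v` and inducing a connected subgraph of `G` is at most
`4^(t-2) * d * (d-1)^(t-2)`. -/
theorem connected_induced_subgraph_count_rooted {V : Type*} [Fintype V] [DecidableEq V]
    (G : SimpleGraph V) [DecidableRel G.Adj] (d t : ℕ) (hd : 1 ≤ d)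
    (hreg : G.IsRegularOfDegree d) (v : V) (ht : 2 ≤ t) :
    {A : Finset V | v ∈ A ∧ A.card = t ∧ (G.induce (A : Set V)).Connected}.ncard ≤
      4 ^ (t - 2) * d * (d - 1) ^ (t - 2) :=
  connected_induced_subgraph_count_rooted_general G d t hreg v ht
end

section
/- Let E be a real inner product space (e.g. Euclidean space ℝ^d), let ε > 0, and let u, v ∈ E satisfy ‖u‖ ≤ 1 + ε, ‖v‖ ≤ 1 + ε, and ‖(1-θ)u + θv‖ ≥ 1 for every θ ∈ [0,1]. Then ‖u - v‖² ≤ 12ε + 6ε², i.e. the distance between u and v is at most √(12ε + 6ε²). -/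
/-- In a real inner product space, if `‖u‖ ≤ 1 + ε`, `‖v‖ ≤ 1 + ε`, and every
point of the segment from `u` to `v` has norm at least `1`, then
`‖u - v‖² ≤ 12ε + 6ε²`. -/
theorem segment_outside_unit_sphere_short {E : Type*} [NormedAddCommGroup E]
    [InnerProductSpace ℝ E] (ε : ℝ) (hε : 0 < ε) (u v : E)
    (hu : ‖u‖ ≤ 1 + ε) (hv : ‖v‖ ≤ 1 + ε)
    (hseg : ∀ θ ∈ Set.Icc (0 : ℝ) 1, 1 ≤ ‖(1 - θ) • u + θ • v‖) :
    ‖u - v‖ ^ 2 ≤ 12 * ε + 6 * ε ^ 2 := by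
  have hm : 1 ≤ ‖(1 - (1/2 : ℝ)) • u + (1/2 : ℝ) • v‖ := hseg (1/2) (by norm_num)
  have h2 : (2 : ℝ) ≤ ‖u + v‖ := by
    have : (1 - (1/2 : ℝ)) • u + (1/2 : ℝ) • v = (1/2 : ℝ) • (u + v) := by
      rw [smul_add]; norm_num
    rw [this, norm_smul] at hm
    simp at hm
    linarith
  have hpar := parallelogram_law_with_norm ℝ u v
  have h4 : (4 : ℝ) ≤ ‖u + v‖ ^ 2 := by nlinarith [norm_nonneg (u + v)]
  have hu2 : ‖u‖ ^ 2 ≤ (1 + ε) ^ 2 := by nlinarith [norm_nonneg u]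
  have hv2 : ‖v‖ ^ 2 ≤ (1 + ε) ^ 2 := by nlinarith [norm_nonneg v]
  nlinarith
end

section
/- Let G be a d-regular simple graph on a finite vertex set V with n vertices, where d ≥ 1, let p ∈ [0,1], let q = 1 - p, let S be a p-Bernoulli random subset of V, and let f(S) denote the number of shallow cuts of S. Then for every ε > 0, the probability that f(S) ≤ (1 - ε) · n · q · p^d is at most exp(-2 ε² q² p^(2d) n / d²). -/
/-!
Each vertex is a shallow cut exactly when it is absent from `S` and its `d` neighbours are
present, so the expected number of shallow cuts is `n q p^d`. Adding a vertex `v` to `S` can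
create shallow cuts only among the `d` neighbours of `v` and destroy only `v` itself, so the count
has bounded differences `d` in each of the `n` coordinates. McDiarmid's inequality then bounds the
probability of falling `ε n q p^d` below the mean by `exp (-2 (ε n q p^d)² / (n d²))`.
McDiarmid's inequality on the Boolean cube is proved by exposing one coordinate at a time and
applying Hoeffding's lemma to the resulting two-point distributions.
-/

open Real Finset Function MeasureTheory ProbabilityTheory

/-- Hoeffding's lemma for a two-point distribution. -/
theorem exp_two_point_le {p : ℝ} (hp0 : 0 ≤ p) (hp1 : p ≤ 1) (t x y : ℝ) :
    p * exp (t * x) + (1 - p) * exp (t * y)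
      ≤ exp (t * (p * x + (1 - p) * y) + t ^ 2 * (x - y) ^ 2 / 8) := by
  set μ : Measure Bool := bernoulliMeasure true false ⟨p, hp0, hp1⟩
  have hμ (f : Bool → ℝ) : ∫ b, f b ∂μ = p * f true + (1 - p) * f false := by
    simp [μ, integral_bernoulliMeasure]
  have hoeffding := (hasSubgaussianMGF_of_mem_Icc (μ := μ) (X := fun b => cond b x y)
    (a := min x y) (b := max x y) (by fun_prop)
    (ae_of_all _ fun b => by cases b <;> simp)).mgf_le t
  set m := p * x + (1 - p) * y
  simp only [mgf, hμ, cond_true, cond_false, NNReal.coe_pow, NNReal.coe_div, coe_nnnorm,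
    max_sub_min_eq_abs', Real.norm_eq_abs, abs_abs, NNReal.coe_ofNat] at hoeffding
  calc p * exp (t * x) + (1 - p) * exp (t * y)
      = exp (t * m) * (p * exp (t * (x - m)) + (1 - p) * exp (t * (y - m))) := by
        rw [mul_add, mul_left_comm, ← exp_add, mul_left_comm (exp _), ← exp_add]
        ring_nf
    _ ≤ exp (t * m) * exp ((|x - y| / 2) ^ 2 * t ^ 2 / 2) := by gcongr
    _ = _ := by rw [← exp_add, div_pow, sq_abs]; ring_nf

section BernoulliProduct

variable {ι : Type*} [Fintype ι] {p : ℝ}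

def bernoulliWeight (p : ℝ) (ω : ι → Bool) : ℝ := ∏ i, if ω i then p else 1 - p

def bernoulliExpect [DecidableEq ι] (p : ℝ) (g : (ι → Bool) → ℝ) : ℝ :=
  ∑ ω, bernoulliWeight p ω * g ω

theorem bernoulliWeight_nonneg (hp0 : 0 ≤ p) (hp1 : p ≤ 1) (ω : ι → Bool) :
    0 ≤ bernoulliWeight p ω :=
  prod_nonneg fun i _ => by split <;> linarith

variable [DecidableEq ι]

theorem bernoulliExpect_prod (F : ι → Bool → ℝ) :
    bernoulliExpect p (fun ω => ∏ i, F i (ω i)) = ∏ i, (p * F i true + (1 - p) * F i false) := by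
  simp only [bernoulliExpect, bernoulliWeight, ← prod_mul_distrib]
  rw [← Fintype.prod_sum fun i b => (if b then p else 1 - p) * F i b]
  simp only [Fintype.sum_bool, if_true, Bool.false_eq_true, if_false]

theorem sum_bernoulliWeight : ∑ ω : ι → Bool, bernoulliWeight p ω = 1 := by
  simpa [bernoulliExpect] using bernoulliExpect_prod (p := p) (fun (_ : ι) (_ : Bool) => (1 : ℝ))

theorem bernoulliExpect_const (c : ℝ) :
    bernoulliExpect p (fun _ : ι → Bool => c) = c := by
  rw [bernoulliExpect, ← sum_mul, sum_bernoulliWeight, one_mul]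

theorem bernoulliExpect_finset_sum {κ : Type*} (s : Finset κ) (h : κ → (ι → Bool) → ℝ) :
    bernoulliExpect p (fun ω => ∑ k ∈ s, h k ω) = ∑ k ∈ s, bernoulliExpect p (h k) := by
  simp only [bernoulliExpect, mul_sum]
  exact sum_comm

theorem abs_bernoulliExpect_sub_le (hp0 : 0 ≤ p) (hp1 : p ≤ 1)
    {g h : (ι → Bool) → ℝ} {c : ℝ} (hgh : ∀ ω, |g ω - h ω| ≤ c) :
    |bernoulliExpect p g - bernoulliExpect p h| ≤ c := by
  calc |bernoulliExpect p g - bernoulliExpect p h|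
      = |∑ ω, bernoulliWeight p ω * (g ω - h ω)| := by
        simp only [bernoulliExpect, ← sum_sub_distrib, mul_sub]
    _ ≤ ∑ ω, bernoulliWeight p ω * c := by
        refine (abs_sum_le_sum_abs _ _).trans (sum_le_sum fun ω _ => ?_)
        rw [abs_mul, abs_of_nonneg (bernoulliWeight_nonneg hp0 hp1 ω)]
        exact mul_le_mul_of_nonneg_left (hgh ω) (bernoulliWeight_nonneg hp0 hp1 ω)
    _ = c := by rw [← sum_mul, sum_bernoulliWeight, one_mul]

theorem bernoulliExpect_eq_sum_funSplitAt (i : ι) (g : (ι → Bool) → ℝ) :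
    bernoulliExpect p g = ∑ η : {j // j ≠ i} → Bool, (∏ j, if η j then p else 1 - p) *
      (p * g ((Equiv.funSplitAt i Bool).symm (true, η))
        + (1 - p) * g ((Equiv.funSplitAt i Bool).symm (false, η))) := by
  rw [bernoulliExpect, ← (Equiv.funSplitAt i Bool).symm.sum_comp, Fintype.sum_prod_type_right]
  refine sum_congr rfl fun η _ => ?_
  have hsplit (b : Bool) : bernoulliWeight p ((Equiv.funSplitAt i Bool).symm (b, η))
      = (if b then p else 1 - p) * ∏ j, if η j then p else 1 - p := by
    rw [bernoulliWeight, Fintype.prod_eq_mul_prod_subtype_ne _ i]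
    simp [fun j : {j // j ≠ i} => j.2]
  simp only [Fintype.sum_bool, hsplit, if_true, Bool.false_eq_true, if_false]
  ring

theorem bernoulliExpect_eq_update (i : ι) (g : (ι → Bool) → ℝ) :
    bernoulliExpect p g = p * bernoulliExpect p (fun ω => g (update ω i true))
      + (1 - p) * bernoulliExpect p (fun ω => g (update ω i false)) := by
  have hupdate (b c : Bool) (η : {j // j ≠ i} → Bool) :
      update ((Equiv.funSplitAt i Bool).symm (c, η)) i b
        = (Equiv.funSplitAt i Bool).symm (b, η) := by
    ext j
    by_cases hj : j = i <;> simp [hj]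
  simp only [bernoulliExpect_eq_sum_funSplitAt i, hupdate, mul_sum, ← sum_add_distrib]
  exact sum_congr rfl fun η _ => by ring

theorem bernoulliExpect_exp_mul_le_of_update (hp0 : 0 ≤ p) (hp1 : p ≤ 1) (i : ι)
    {g : (ι → Bool) → ℝ} {c K t : ℝ}
    (htrue : bernoulliExpect p (fun ω => exp (t * g (update ω i true)))
      ≤ exp (t * bernoulliExpect p (fun ω => g (update ω i true)) + K))
    (hfalse : bernoulliExpect p (fun ω => exp (t * g (update ω i false)))
      ≤ exp (t * bernoulliExpect p (fun ω => g (update ω i false)) + K))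
    (hmean : |bernoulliExpect p (fun ω => g (update ω i true))
      - bernoulliExpect p (fun ω => g (update ω i false))| ≤ c) :
    bernoulliExpect p (fun ω => exp (t * g ω))
      ≤ exp (t * bernoulliExpect p g + (t ^ 2 * c ^ 2 / 8 + K)) := by
  set mT := bernoulliExpect p (fun ω => g (update ω i true))
  set mF := bernoulliExpect p (fun ω => g (update ω i false))
  have hq0 : 0 ≤ 1 - p := by linarith
  calc bernoulliExpect p (fun ω => exp (t * g ω))
      ≤ p * exp (t * mT + K) + (1 - p) * exp (t * mF + K) := by
        rw [bernoulliExpect_eq_update i]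
        gcongr
    _ = exp K * (p * exp (t * mT) + (1 - p) * exp (t * mF)) := by
        simp only [exp_add]; ring
    _ ≤ exp K * exp (t * (p * mT + (1 - p) * mF) + t ^ 2 * (mT - mF) ^ 2 / 8) := by
        gcongr
        exact exp_two_point_le hp0 hp1 _ _ _
    _ ≤ exp (t * bernoulliExpect p g + (t ^ 2 * c ^ 2 / 8 + K)) := by
        rw [← exp_add, exp_le_exp, bernoulliExpect_eq_update i g]
        have := mul_le_mul_of_nonneg_left (sq_le_sq' (abs_le.mp hmean).1 (abs_le.mp hmean).2)
          (sq_nonneg t)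
        linarith only [this]

/-- McDiarmid's bounded-differences inequality, in moment-generating-function form. -/
theorem bernoulliExpect_exp_mul_le (hp0 : 0 ≤ p) (hp1 : p ≤ 1) {c : ι → ℝ} (s : Finset ι)
    {g : (ι → Bool) → ℝ} (hg : DependsOn g s)
    (hdiff : ∀ ω, ∀ i ∈ s, |g (update ω i true) - g (update ω i false)| ≤ c i) (t : ℝ) :
    bernoulliExpect p (fun ω => exp (t * g ω))
      ≤ exp (t * bernoulliExpect p g + t ^ 2 * (∑ i ∈ s, c i ^ 2) / 8) := by
  induction s using Finset.induction_on generalizing g with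
  | empty =>
    have hconst : g = fun _ => g default := funext fun ω => hg (by simp)
    rw [hconst, bernoulliExpect_const, bernoulliExpect_const]
    simp
  | @insert a s ha ih =>
    have hdep (b : Bool) : DependsOn (fun ω => g (update ω a b)) s := by
      simpa [ha] using hg.update a b
    have hdiff_update (b : Bool) : ∀ ω, ∀ i ∈ s, |g (update (update ω i true) a b)
        - g (update (update ω i false) a b)| ≤ c i := fun ω i hi => by
      have hia : i ≠ a := ne_of_mem_of_not_mem hi ha
      rw [update_comm hia, update_comm hia]
      exact hdiff _ i (mem_insert_of_mem hi)
    have hmean := abs_bernoulliExpect_sub_le hp0 hp1 fun ω => by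
      simpa using hdiff ω a (mem_insert_self a s)
    refine (bernoulliExpect_exp_mul_le_of_update hp0 hp1 a (ih (hdep true) (hdiff_update true))
      (ih (hdep false) (hdiff_update false)) hmean).trans_eq ?_
    rw [sum_insert ha]
    ring_nf

theorem sum_bernoulliWeight_le_le_exp_mul (hp0 : 0 ≤ p) (hp1 : p ≤ 1) (g : (ι → Bool) → ℝ)
    (a : ℝ) {t : ℝ} (ht : 0 ≤ t) :
    ∑ ω with g ω ≤ a, bernoulliWeight p ω
      ≤ exp (t * a) * bernoulliExpect p (fun ω => exp (-t * g ω)) := by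
  rw [bernoulliExpect, mul_sum, sum_filter]
  refine sum_le_sum fun ω _ => ?_
  have hw := bernoulliWeight_nonneg hp0 hp1 ω
  rw [mul_left_comm, ← exp_add]
  split_ifs with hga
  · exact le_mul_of_one_le_right hw (one_le_exp (by nlinarith))
  · positivity

/-- McDiarmid's inequality, lower tail. -/
theorem sum_bernoulliWeight_le_sub_le (hp0 : 0 ≤ p) (hp1 : p ≤ 1) {c : ι → ℝ}
    {g : (ι → Bool) → ℝ} (hdiff : ∀ ω i, |g (update ω i true) - g (update ω i false)| ≤ c i)
    {δ : ℝ} (hδ : 0 ≤ δ) :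
    ∑ ω with g ω ≤ bernoulliExpect p g - δ, bernoulliWeight p ω
      ≤ exp (-2 * δ ^ 2 / ∑ i, c i ^ 2) := by
  set C := ∑ i, c i ^ 2
  have ht : 0 ≤ 4 * δ / C := by positivity
  have hmgf := bernoulliExpect_exp_mul_le hp0 hp1 univ (by simpa using dependsOn_univ g)
    (fun ω i _ => hdiff ω i) (-(4 * δ / C))
  refine (sum_bernoulliWeight_le_le_exp_mul hp0 hp1 g _ ht).trans ?_
  refine (mul_le_mul_of_nonneg_left hmgf (exp_nonneg _)).trans_eq ?_
  rw [← exp_add]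
  congr 1
  -- for `C = 0` both sides vanish, since then `4 * δ / C = 0` and `δ ^ 2 / C = 0`
  rcases eq_or_ne C 0 with hC | hC
  · simp [hC]
  · field_simp
    ring

theorem bernoulliExpect_indicator_forall_mem (s : Finset ι) (τ : ι → Bool) :
    bernoulliExpect p (fun ω => if ∀ i ∈ s, ω i = τ i then 1 else 0)
      = ∏ i ∈ s, if τ i then p else 1 - p := by
  have hprod (ω : ι → Bool) : (if ∀ i ∈ s, ω i = τ i then (1 : ℝ) else 0)
      = ∏ i, if i ∈ s then (if ω i = τ i then 1 else 0) else 1 := by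
    rw [prod_ite_mem, univ_inter, prod_boole]
    congr
  simp only [hprod]
  rw [bernoulliExpect_prod fun i b => if i ∈ s then (if b = τ i then 1 else 0) else 1,
    ← univ_inter s, ← prod_ite_mem]
  refine prod_congr rfl fun i _ => ?_
  by_cases hi : i ∈ s <;> cases τ i <;> simp [hi]

end BernoulliProduct

section BernoulliMeasure

variable {ι : Type*} [Fintype ι] {p : ℝ}

theorem measure_pi_bernoulli_singleton (hp0 : 0 ≤ p) (hp1 : p ≤ 1) (ω : ι → Bool) :
    Measure.pi (fun _ => (PMF.bernoulli p.toNNReal (Real.toNNReal_le_one.mpr hp1)).toMeasure) {ω}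
      = ENNReal.ofReal (bernoulliWeight p ω) := by
  rw [← Set.univ_pi_singleton, Measure.pi_pi, bernoulliWeight,
    ENNReal.ofReal_prod_of_nonneg fun i _ => by split <;> linarith]
  refine prod_congr rfl fun i _ => ?_
  rw [PMF.toMeasure_apply_singleton _ _ (measurableSet_singleton _), PMF.bernoulli_apply]
  cases ω i
  · simp [ENNReal.ofReal_sub, hp0]
    rfl
  · simp [ENNReal.ofReal]

variable [DecidableEq ι]

theorem measure_pi_bernoulli_eq_sum (hp0 : 0 ≤ p) (hp1 : p ≤ 1) (P : (ι → Bool) → Prop)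
    [DecidablePred P] :
    Measure.pi (fun _ => (PMF.bernoulli p.toNNReal (Real.toNNReal_le_one.mpr hp1)).toMeasure)
      {ω | P ω} = ENNReal.ofReal (∑ ω with P ω, bernoulliWeight p ω) := by
  rw [ENNReal.ofReal_sum_of_nonneg fun ω _ => bernoulliWeight_nonneg hp0 hp1 ω]
  simp only [← measure_pi_bernoulli_singleton hp0 hp1]
  rw [sum_measure_singleton, coe_filter]
  simp

end BernoulliMeasure

section ShallowCuts

variable {V : Type*} [Fintype V] [DecidableEq V] (G : SimpleGraph V) [DecidableRel G.Adj]

def shallowCuts (ω : V → Bool) : Finset V :=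
  {v | ω v = false ∧ ∀ w ∈ G.neighborFinset v, ω w = true}

theorem shallowCuts_update_true_subset (ω : V → Bool) (v : V) :
    shallowCuts G (update ω v true) ⊆ shallowCuts G (update ω v false) ∪ G.neighborFinset v := by
  intro u hu
  rw [mem_union, or_iff_not_imp_right]
  intro huv
  simp only [shallowCuts, mem_filter, mem_univ, true_and] at hu ⊢
  have hne : u ≠ v := by rintro rfl; simp at hu
  refine ⟨by simpa [hne] using hu.1, fun w hw => ?_⟩
  have hwv : w ≠ v := by rintro rfl; exact huv (by simpa [G.adj_comm] using hw)
  simpa [hwv] using hu.2 w hw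

theorem shallowCuts_update_false_subset (ω : V → Bool) (v : V) :
    shallowCuts G (update ω v false) ⊆ shallowCuts G (update ω v true) ∪ {v} := by
  intro u hu
  rw [mem_union, mem_singleton, or_iff_not_imp_right]
  intro hne
  simp only [shallowCuts, mem_filter, mem_univ, true_and] at hu ⊢
  refine ⟨by simpa [hne] using hu.1, fun w hw => ?_⟩
  by_cases hwv : w = v
  · simp [hwv]
  · simpa [hwv] using hu.2 w hw

theorem abs_card_shallowCuts_update_sub_le {d : ℕ} (hd : 1 ≤ d) (hreg : G.IsRegularOfDegree d)
    (ω : V → Bool) (v : V) :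
    |(#(shallowCuts G (update ω v true)) : ℝ) - #(shallowCuts G (update ω v false))| ≤ d := by
  have htrue := (card_le_card (shallowCuts_update_true_subset G ω v)).trans (card_union_le _ _)
  have hfalse := (card_le_card (shallowCuts_update_false_subset G ω v)).trans (card_union_le _ _)
  rw [G.card_neighborFinset_eq_degree, hreg v] at htrue
  rw [card_singleton] at hfalse
  rw [abs_sub_le_iff, sub_le_iff_le_add, sub_le_iff_le_add]
  constructor <;> norm_cast <;> omega

theorem bernoulliExpect_card_shallowCuts {p : ℝ} {d : ℕ} (hreg : G.IsRegularOfDegree d) :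
    bernoulliExpect p (fun ω => (#(shallowCuts G ω) : ℝ)) = Fintype.card V * ((1 - p) * p ^ d) := by
  have hcylinder (ω : V → Bool) (v : V) : (ω v = false ∧ ∀ w ∈ G.neighborFinset v, ω w = true)
      ↔ ∀ u ∈ insert v (G.neighborFinset v), ω u = decide (u ≠ v) := by
    rw [forall_mem_insert]
    simp only [ne_eq, not_true_eq_false, decide_false]
    refine and_congr_right fun _ => forall₂_congr fun u hu => ?_
    rw [decide_eq_true (G.ne_of_adj ((G.mem_neighborFinset v u).mp hu)).symm]
  simp only [shallowCuts, natCast_card_filter, hcylinder]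
  rw [bernoulliExpect_finset_sum]
  simp only [bernoulliExpect_indicator_forall_mem]
  rw [← nsmul_eq_mul, ← card_univ, ← sum_const]
  refine sum_congr rfl fun v _ => ?_
  rw [prod_insert (G.notMem_neighborFinset_self v), prod_congr rfl fun u hu => if_pos
    (decide_eq_true (G.ne_of_adj ((G.mem_neighborFinset v u).mp hu)).symm), prod_const,
    G.card_neighborFinset_eq_degree, hreg v]
  simp

end ShallowCuts

/-- Let `G` be a `d`-regular graph on a finite vertex set `V` with `n` vertices,
`d ≥ 1`, let `p ∈ [0,1]`, `q = 1 - p`, and let `S` be a `p`-Bernoulli random subset of `V`,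
modelled by the product of Bernoulli(`p`) measures on `V → Bool`.  Let `f S` be the number of
shallow cuts of `S` (vertices `v ∉ S` all of whose neighbors are in `S`).  Then for every
`ε > 0`, the probability that `f S ≤ (1 - ε) n q p^d` is at most
`exp (-2 ε² q² p^(2d) n / d²)`. -/
theorem shallow_cuts_concentration {V : Type*} [Fintype V] [DecidableEq V]
    (G : SimpleGraph V) [DecidableRel G.Adj] (d : ℕ) (hd : 1 ≤ d)
    (hreg : G.IsRegularOfDegree d) (p q : ℝ) (hp0 : 0 ≤ p) (hp1 : p ≤ 1) (hq : q = 1 - p)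
    (ε : ℝ) (hε : 0 < ε) :
    (Measure.pi fun _ : V =>
        (PMF.bernoulli (Real.toNNReal p) (Real.toNNReal_le_one.mpr hp1)).toMeasure)
      {ω : V → Bool |
        ((Finset.univ.filter fun v : V =>
            ω v = false ∧ ∀ w ∈ G.neighborFinset v, ω w = true).card : ℝ)
          ≤ (1 - ε) * (Fintype.card V : ℝ) * q * p ^ d}
      ≤ ENNReal.ofReal
          (Real.exp (-2 * ε ^ 2 * q ^ 2 * p ^ (2 * d) * (Fintype.card V : ℝ) / (d : ℝ) ^ 2)) := by
  subst hq
  set δ := ε * ((Fintype.card V : ℝ) * ((1 - p) * p ^ d)) with hδ_def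
  have hq0 : 0 ≤ 1 - p := by linarith
  have hδ : 0 ≤ δ := by positivity
  have htail := sum_bernoulliWeight_le_sub_le hp0 hp1 (c := fun _ => (d : ℝ))
    (g := fun ω => (#(shallowCuts G ω) : ℝ)) (abs_card_shallowCuts_update_sub_le G hd hreg) hδ
  have hthreshold : (1 - ε) * (Fintype.card V : ℝ) * (1 - p) * p ^ d
      = Fintype.card V * ((1 - p) * p ^ d) - δ := by ring
  have hexponent : -2 * ε ^ 2 * (1 - p) ^ 2 * p ^ (2 * d) * (Fintype.card V : ℝ) / (d : ℝ) ^ 2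
      = -2 * δ ^ 2 / ∑ _ : V, (d : ℝ) ^ 2 := by
    rw [sum_const, card_univ, nsmul_eq_mul, pow_mul' p 2 d]
    rcases eq_or_ne (Fintype.card V : ℝ) 0 with hn | hn
    · simp [hδ_def, hn]
    · rw [hδ_def]
      field_simp
  rw [bernoulliExpect_card_shallowCuts G hreg] at htail
  rw [hthreshold, hexponent, measure_pi_bernoulli_eq_sum hp0 hp1]
  exact ENNReal.ofReal_le_ofReal htail
end

section
/- Define the sequence (γ_k) by γ₀ = 1/2 and γ_{k+1} = 1/(2π(k+1)γ_k), and for each integer d ≥ 2 set F(d) = (2/d) · γ_{(d-1)²} · γ_{d-1}^{-(d-1)}. Then log F(d) = Θ(d log d); that is, there exist constants c₁, c₂ > 0 and an integer D such that for all d ≥ D, c₁ · d · log d ≤ log F(d) ≤ c₂ · d · log d. -/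
/-- The sequence `γ` of Buchta–Müller–Tichy: `γ₀ = 1/2`, `γ_{k+1} = 1/(2π(k+1)γ_k)`. -/
noncomputable def gammaSeq : ℕ → ℝ
  | 0 => 1 / 2
  | k + 1 => 1 / (2 * Real.pi * (k + 1) * gammaSeq k)

/-- The Buchta–Müller–Tichy constant `F(d) = (2/d) γ_{(d-1)²} γ_{d-1}^{-(d-1)}`. -/
noncomputable def BMTconst (d : ℕ) : ℝ :=
  (2 / d) * gammaSeq ((d - 1) ^ 2) * gammaSeq (d - 1) ^ (-((d : ℤ) - 1))

/-!
Multiplying two consecutive instances of the recursion gives `γ_{k+2} = (k+1)/(k+2) · γ_k`, and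
induction yields `γ_k² ≤ 1/(4(k+1))`. Fed back into `γ_k γ_{k+1} = 1/(2π(k+1))` this gives
`γ_k² ≥ 1/(π²(k+1))`, so `log γ_k = -½ log (k+1) + O(1)`. In
`log F(d) = log 2 - log d + log γ_{(d-1)²} - (d-1) log γ_{d-1}` the last term is then
`½ (d-1) log d + O(d)` and the others are `O(log d)`.
-/

open Real

lemma gammaSeq_pos : ∀ k, 0 < gammaSeq k
  | 0 => by norm_num [gammaSeq]
  | k + 1 => by
    have := gammaSeq_pos k
    rw [gammaSeq]
    positivity

lemma gammaSeq_mul_gammaSeq_succ (k : ℕ) :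
    gammaSeq k * gammaSeq (k + 1) = 1 / (2 * π * (k + 1)) := by
  have := (gammaSeq_pos k).ne'
  rw [gammaSeq]
  field_simp

lemma gammaSeq_add_two (k : ℕ) : gammaSeq (k + 2) = (k + 1) / (k + 2) * gammaSeq k := by
  have := (gammaSeq_pos k).ne'
  rw [gammaSeq, gammaSeq]
  push_cast
  field_simp
  ring

lemma gammaSeq_sq_le : ∀ k : ℕ, gammaSeq k ^ 2 ≤ 1 / (4 * (k + 1))
  | 0 => by norm_num [gammaSeq]
  | 1 => by
    have := pi_gt_three
    rw [show (1 : ℕ) = 0 + 1 from rfl, gammaSeq, gammaSeq, div_pow,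
      div_le_div_iff₀ (by positivity) (by positivity)]
    push_cast
    nlinarith
  | k + 2 => by
    have ih := gammaSeq_sq_le k
    have hk : (0 : ℝ) ≤ k := k.cast_nonneg
    rw [gammaSeq_add_two, mul_pow, div_pow]
    push_cast
    calc ((k : ℝ) + 1) ^ 2 / (k + 2) ^ 2 * gammaSeq k ^ 2
        ≤ (k + 1) ^ 2 / (k + 2) ^ 2 * (1 / (4 * (k + 1))) := by gcongr
      _ ≤ 1 / (4 * ((k : ℝ) + 2 + 1)) := by
        rw [div_mul_div_comm, div_le_div_iff₀ (by positivity) (by positivity)]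
        nlinarith

lemma inv_pi_sq_le_gammaSeq_sq (k : ℕ) : 1 / (π ^ 2 * (k + 1)) ≤ gammaSeq k ^ 2 := by
  have hprod : gammaSeq k ^ 2 * gammaSeq (k + 1) ^ 2 = 1 / (4 * π ^ 2 * (k + 1) ^ 2) := by
    rw [← mul_pow, gammaSeq_mul_gammaSeq_succ, div_pow]; ring
  have hnext := gammaSeq_sq_le (k + 1)
  have hpos := pow_pos (gammaSeq_pos (k + 1)) 2
  have hk : (0 : ℝ) ≤ k := k.cast_nonneg
  rw [eq_div_iff (by positivity)] at hprod
  rw [le_div_iff₀ (by positivity)] at hnext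
  rw [div_le_iff₀ (by positivity)]
  push_cast at hnext
  have hscale : (0 : ℝ) ≤ gammaSeq k ^ 2 * (π ^ 2 * (k + 1)) := by positivity
  nlinarith [mul_le_mul_of_nonneg_left hnext hscale]

lemma log_gammaSeq_le (k : ℕ) : log (gammaSeq k) ≤ -log 2 - log (k + 1) / 2 := by
  have h := log_le_log (pow_pos (gammaSeq_pos k) 2) (gammaSeq_sq_le k)
  rw [log_pow, one_div, log_inv, log_mul (by norm_num) (by positivity),
    show (4 : ℝ) = 2 ^ 2 by norm_num, log_pow] at h
  push_cast at h
  linarith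

lemma neg_log_pi_sub_le_log_gammaSeq (k : ℕ) :
    -log π - log (k + 1) / 2 ≤ log (gammaSeq k) := by
  have h := log_le_log (by positivity) (inv_pi_sq_le_gammaSeq_sq k)
  rw [log_pow, one_div, log_inv, log_mul (by positivity) (by positivity), log_pow] at h
  push_cast at h
  linarith

lemma log_BMTconst_succ (n : ℕ) :
    log (BMTconst (n + 1)) =
      log 2 - log (n + 1) + log (gammaSeq (n ^ 2)) - n * log (gammaSeq n) := by
  have h₁ := gammaSeq_pos (n ^ 2)
  have h₂ := gammaSeq_pos n
  rw [BMTconst, Nat.add_sub_cancel,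
    show -(((n + 1 : ℕ) : ℤ) - 1) = -(n : ℤ) by push_cast; ring,
    log_mul (by positivity) (by positivity), log_mul (by positivity) h₁.ne',
    log_div (by norm_num) (by positivity), log_zpow]
  push_cast
  ring

lemma le_log_BMTconst_succ (n : ℕ) :
    (n / 2 - 2) * log (n + 1) + (n + 1) * log 2 - log π ≤ log (BMTconst (n + 1)) := by
  have hn : (0 : ℝ) ≤ n := n.cast_nonneg
  have hsq : log ((n : ℝ) ^ 2 + 1) ≤ 2 * log (n + 1) := by
    calc log ((n : ℝ) ^ 2 + 1) ≤ log (((n : ℝ) + 1) ^ 2) :=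
          log_le_log (by positivity) (by nlinarith)
      _ = 2 * log (n + 1) := by rw [log_pow]; norm_num
  have hγn := mul_le_mul_of_nonneg_left (log_gammaSeq_le n) hn
  have hγn2 := neg_log_pi_sub_le_log_gammaSeq (n ^ 2)
  push_cast at hγn2
  rw [log_BMTconst_succ]
  linarith

lemma log_BMTconst_succ_le (n : ℕ) :
    log (BMTconst (n + 1)) ≤ (n / 2 - 1) * log (n + 1) + n * log π := by
  have hn : (0 : ℝ) ≤ n := n.cast_nonneg
  have hsq : 0 ≤ log ((n : ℝ) ^ 2 + 1) := log_nonneg (by nlinarith)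
  have hγn := mul_le_mul_of_nonneg_left (neg_log_pi_sub_le_log_gammaSeq n) hn
  have hγn2 := log_gammaSeq_le (n ^ 2)
  push_cast at hγn2
  rw [log_BMTconst_succ]
  linarith

/-- `log F(d) = Θ(d log d)`: there are constants `c₁, c₂ > 0` and a threshold
`D` such that `c₁ d log d ≤ log F(d) ≤ c₂ d log d` for all `d ≥ D`. -/
theorem log_BMTconst_theta :
    ∃ c₁ c₂ : ℝ, 0 < c₁ ∧ 0 < c₂ ∧ ∃ D : ℕ, ∀ d : ℕ, D ≤ d →
      c₁ * d * Real.log d ≤ Real.log (BMTconst d) ∧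
        Real.log (BMTconst d) ≤ c₂ * d * Real.log d := by
  refine ⟨1 / 4, 3 / 2, by norm_num, by norm_num, 10, fun d hd => ?_⟩
  obtain ⟨n, rfl⟩ : ∃ n, d = n + 1 := ⟨d - 1, by omega⟩
  have hn : (9 : ℝ) ≤ n := by exact_mod_cast Nat.le_of_succ_le_succ hd
  push_cast
  have hlog_nonneg : 0 ≤ log ((n : ℝ) + 1) := log_nonneg (by linarith)
  have hlog_pi_le_two_log_two : log π ≤ 2 * log 2 := by
    rw [← log_rpow two_pos]; exact log_le_log pi_pos (by norm_num; exact pi_le_four)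
  have hlog_pi_le : log π ≤ log (n + 1) := log_le_log pi_pos (by linarith [pi_le_four])
  constructor
  · nlinarith [le_log_BMTconst_succ n, log_nonneg one_le_two]
  · nlinarith [log_BMTconst_succ_le n]
end
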